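/- If λ covers μ in the dominance order on partitions of n, then there exist indices i < j such that λ_i = μ_i + 1, λ_j = μ_j − 1, and λ_k = μ_k for all k ≠ i, j. -/

import Mathlib

/-- The parts of a partition sorted in weakly decreasing order. -/
def partsList {n : ℕ} (p : Nat.Partition n) : List ℕ := p.parts.sort (· ≥ ·)

/-- The `i`-th part (1-indexed) of a partition, with the convention that
`part p i = 0` for `i` beyond the length. -/
def part {n : ℕ} (p : Nat.Partition n) (i : ℕ) : ℕ := (partsList p).getD (i - 1) 0

/-- The partial sum `λ₁ + ⋯ + λ_j`. -/
def psum {n : ℕ} (p : Nat.Partition n) (j : ℕ) : ℕ := ∑ i ∈ Finset.range j, part p (i + 1)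

/-- Dominance ordering: `Dominates l m` means `l ≥ m`, i.e. every partial sum of `l`
is at least the corresponding partial sum of `m`. -/
def Dominates {n : ℕ} (l m : Nat.Partition n) : Prop := ∀ j, psum m j ≤ psum l j

/-- Strict dominance: `l > m`. -/
def SDom {n : ℕ} (l m : Nat.Partition n) : Prop := Dominates l m ∧ l ≠ m

/-- The number of (nonzero) parts of a partition. -/
def plen {n : ℕ} (p : Nat.Partition n) : ℕ := Multiset.card p.parts

/-- `l` covers `m` in the dominance order: `l > m` and nothing strictly in between. -/
def Covers {n : ℕ} (l m : Nat.Partition n) : Prop :=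
  SDom l m ∧ ¬ ∃ ν : Nat.Partition n, SDom l ν ∧ SDom ν m

/-!
Let `i` be the first index at which the partial sums of `λ` exceed those of `μ`, and `j > i` the
first index after it at which they agree again. Then `μ_i < μ_k` for all `k < i` and
`μ_k < μ_j` for all `k > j`, so moving one box of `μ` from row `j` to row `i` gives a partition
`ν` whose partial sums are those of `μ` plus one exactly on `[i, j)`. Hence `λ ≥ ν > μ`, and
since `λ` covers `μ`, `λ = ν`.
-/

namespace List

lemma getD_antitone {L : List ℕ} (hL : L.Pairwise (· ≥ ·)) : Antitone (L.getD · 0) := by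
  intro a b hab
  dsimp only
  rcases Nat.lt_or_ge b L.length with hb | hb
  · rw [L.getD_eq_getElem 0 hb, L.getD_eq_getElem 0 (hab.trans_lt hb)]
    exact hL.rel_get_of_le (a := ⟨a, hab.trans_lt hb⟩) (b := ⟨b, hb⟩) hab
  · simp only [L.getD_eq_default 0 hb, zero_le]

lemma sum_range_getD {L : List ℕ} {k : ℕ} (hk : L.length ≤ k) :
    ∑ t ∈ Finset.range k, L.getD t 0 = L.sum := by
  induction L generalizing k with
  | nil => simp
  | cons a L ih =>
    obtain ⟨k, rfl⟩ : ∃ k', k = k' + 1 := ⟨k - 1, by simp at hk; omega⟩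
    rw [Finset.sum_range_succ', sum_cons, add_comm]
    simpa using ih (by simpa using hk)

lemma getD_filter_ne_zero {L : List ℕ} (hL : L.Pairwise (· ≥ ·)) (t : ℕ) :
    (L.filter (· ≠ 0)).getD t 0 = L.getD t 0 := by
  induction L generalizing t with
  | nil => rfl
  | cons a L ih =>
    by_cases ha : a = 0
    · subst ha
      have hzero : ∀ x ∈ L, x = 0 := fun x hx => Nat.le_zero.mp (rel_of_pairwise_cons hL hx)
      rw [eq_replicate_iff (l := 0 :: L) (a := 0) |>.mpr ⟨rfl, by simpa using hzero⟩]
      simp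
    · rw [filter_cons_of_pos (by simpa using ha)]
      cases t with
      | zero => rfl
      | succ t => simpa using ih hL.of_cons t

lemma ext_getD_of_forall_pos {L M : List ℕ} (hL : ∀ x ∈ L, 0 < x) (hM : ∀ x ∈ M, 0 < x)
    (h : ∀ t, L.getD t 0 = M.getD t 0) : L = M := by
  ext t : 1
  have := h t
  simp only [getD_eq_getElem?_getD] at this
  cases hl : L[t]? <;> cases hm : M[t]? <;> simp_all
  · have := hM _ (mem_of_getElem? hm); omega
  · have := hL _ (mem_of_getElem? hl); omega

end List

variable {n : ℕ}

lemma partsList_pairwise (p : Nat.Partition n) : (partsList p).Pairwise (· ≥ ·) :=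
  p.parts.pairwise_sort _

lemma coe_partsList (p : Nat.Partition n) : (partsList p : Multiset ℕ) = p.parts :=
  p.parts.sort_eq _

lemma part_antitone (p : Nat.Partition n) : Antitone (part p) :=
  (List.getD_antitone (partsList_pairwise p)).comp_monotone fun _ _ h => Nat.sub_le_sub_right h 1

lemma psum_zero (p : Nat.Partition n) : psum p 0 = 0 := rfl

lemma psum_succ (p : Nat.Partition n) (k : ℕ) : psum p (k + 1) = psum p k + part p (k + 1) :=
  Finset.sum_range_succ _ _

lemma psum_of_plen_le (p : Nat.Partition n) {k : ℕ} (hk : plen p ≤ k) : psum p k = n := by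
  have hlen : (partsList p).length ≤ k := by rwa [partsList, Multiset.length_sort]
  have hsum : (partsList p).sum = n := by rw [← Multiset.sum_coe, coe_partsList, p.parts_sum]
  simpa [psum, part, hsum] using List.sum_range_getD hlen

lemma part_eq_zero_of_plen_lt (p : Nat.Partition n) {k : ℕ} (hk : plen p < k) : part p k = 0 := by
  obtain ⟨k, rfl⟩ : ∃ k', k = k' + 1 := ⟨k - 1, by omega⟩
  have := psum_succ p k
  rw [psum_of_plen_le p (by omega), psum_of_plen_le p (by omega)] at this
  omega

lemma eq_of_forall_psum_eq {p q : Nat.Partition n} (h : ∀ k, psum p k = psum q k) : p = q := by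
  have hpart : ∀ t, part p (t + 1) = part q (t + 1) := fun t => by
    have := psum_succ p t; have := psum_succ q t; have := h t; have := h (t + 1); omega
  have hpos : ∀ r : Nat.Partition n, ∀ x ∈ partsList r, 0 < x := fun r x hx =>
    r.parts_pos (by rw [← coe_partsList]; exact_mod_cast hx)
  have : partsList p = partsList q :=
    List.ext_getD_of_forall_pos (hpos p) (hpos q) (by simpa [part] using hpart)
  exact Nat.Partition.ext (by rw [← coe_partsList p, ← coe_partsList q, this])

lemma exists_part_eq {f : ℕ → ℕ} (hf : ∀ k, 1 ≤ k → f (k + 1) ≤ f k) {N : ℕ}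
    (hN : f (N + 1) = 0) (hsum : ∑ t ∈ Finset.range N, f (t + 1) = n) :
    ∃ p : Nat.Partition n, ∀ k, 1 ≤ k → part p k = f k := by
  have hanti : Antitone fun t => f (t + 1) := antitone_nat_of_succ_le fun t => hf (t + 1) (by omega)
  set L := (List.range N).map fun t => f (t + 1)
  have hL : L.Pairwise (· ≥ ·) :=
    List.pairwise_map.mpr (List.pairwise_lt_range.imp fun h => hanti h.le)
  have hgetD : ∀ t, L.getD t 0 = f (t + 1) := fun t => by
    rcases Nat.lt_or_ge t N with ht | ht
    · rw [List.getD_eq_getElem _ _ (by simpa [L] using ht)]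
      simp [L]
    · rw [List.getD_eq_default _ _ (by simpa [L] using ht)]
      exact (Nat.le_zero.mp (hN ▸ hanti ht)).symm
  have hLsum : (L : Multiset ℕ).sum = n := by
    rw [Multiset.sum_coe, ← List.sum_range_getD (k := N) (by simp [L])]
    simp only [hgetD]
    exact hsum
  refine ⟨Nat.Partition.ofSums n L hLsum, fun k hk => ?_⟩
  have hsort : partsList (Nat.Partition.ofSums n L hLsum) = L.filter (· ≠ 0) :=
    List.Perm.eq_of_pairwise' (partsList_pairwise _) (hL.filter _)
      (Multiset.coe_eq_coe.mp (by rw [coe_partsList]; simp))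
  obtain ⟨k, rfl⟩ : ∃ k', k = k' + 1 := ⟨k - 1, by omega⟩
  rw [part, hsort, Nat.add_sub_cancel, List.getD_filter_ne_zero hL, hgetD]

lemma sum_range_add_ite_le {a b : ℕ → ℕ} {i j : ℕ} (hi : 1 ≤ i) (hj : 1 ≤ j)
    (h : ∀ k, 1 ≤ k → a k + (if k = j then 1 else 0) = b k + (if k = i then 1 else 0))
    (k : ℕ) :
    ∑ t ∈ Finset.range k, a (t + 1) + (if j ≤ k then 1 else 0) =
      ∑ t ∈ Finset.range k, b (t + 1) + (if i ≤ k then 1 else 0) := by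
  induction k with
  | zero => simp [Nat.ne_zero_of_lt hi, Nat.ne_zero_of_lt hj]
  | succ k ih =>
    have := h (k + 1) (by omega)
    rw [Finset.sum_range_succ, Finset.sum_range_succ]
    split_ifs at * <;> omega

/-- The raising operator `R_{ij}`, moving one box of `m` from row `j` up to row `i`. -/
lemma exists_part_add_ite_eq (m : Nat.Partition n) {i j : ℕ} (hi : 1 ≤ i) (hij : i < j)
    (hi_lt : ∀ k, 1 ≤ k → k < i → part m i < part m k)
    (hj_lt : ∀ k, j < k → part m k < part m j) :
    ∃ ν : Nat.Partition n, ∀ k, 1 ≤ k →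
      part ν k + (if k = j then 1 else 0) = part m k + (if k = i then 1 else 0) := by
  set g : ℕ → ℕ := fun k => part m k + (if k = i then 1 else 0) - (if k = j then 1 else 0)
  have hj_pos : 0 < part m j := (Nat.zero_le _).trans_lt (hj_lt (j + 1) (by omega))
  have hg : ∀ k, 1 ≤ k → g k + (if k = j then 1 else 0) = part m k + (if k = i then 1 else 0) :=
    fun k _ => by simp only [g]; split_ifs <;> subst_vars <;> omega
  have hg_succ : ∀ k, 1 ≤ k → g (k + 1) ≤ g k := fun k hk => by
    have := part_antitone m (Nat.le_add_right k 1)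
    have : k + 1 = i → part m (k + 1) < part m k := by rintro rfl; exact hi_lt k hk (by omega)
    have : k = j → part m (k + 1) < part m k := by rintro rfl; exact hj_lt (k + 1) (by omega)
    simp only [g]
    split_ifs <;> omega
  have hsum := sum_range_add_ite_le hi (by omega) hg (plen m + j)
  rw [← psum, psum_of_plen_le m (by omega)] at hsum
  obtain ⟨ν, hν⟩ := exists_part_eq (n := n) (f := g) (N := plen m + j) hg_succ
    (by simp only [g, part_eq_zero_of_plen_lt m (show plen m < plen m + j + 1 by omega)]
        split_ifs <;> omega)
    (by split_ifs at hsum <;> omega)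
  exact ⟨ν, fun k hk => hν k hk ▸ hg k hk⟩

lemma psum_add_ite_le {p q : Nat.Partition n} {i j : ℕ} (hi : 1 ≤ i) (hj : 1 ≤ j)
    (h : ∀ k, 1 ≤ k → part p k + (if k = j then 1 else 0) = part q k + (if k = i then 1 else 0))
    (k : ℕ) : psum p k + (if j ≤ k then 1 else 0) = psum q k + (if i ≤ k then 1 else 0) :=
  sum_range_add_ite_le hi hj h k

section Dominance

variable {l m : Nat.Partition n}

lemma Covers.eq_of_dominates {ν : Nat.Partition n} (h : Covers l m) (hlν : Dominates l ν)
    (hνm : Dominates ν m) (hνm_ne : ν ≠ m) : l = ν := by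
  by_contra hlν_ne
  exact h.2 ⟨ν, ⟨hlν, hlν_ne⟩, hνm, hνm_ne⟩

lemma SDom.exists_first_psum_lt (h : SDom l m) :
    ∃ i, 1 ≤ i ∧ psum m i < psum l i ∧ ∀ k < i, psum l k = psum m k := by
  have hex : ∃ k, psum m k < psum l k := by
    by_contra! hle
    exact h.2 (eq_of_forall_psum_eq fun k => le_antisymm (hle k) (h.1 k))
  refine ⟨Nat.find hex, ?_, Nat.find_spec hex, fun k hk => ?_⟩
  · by_contra! h0
    simpa [Nat.lt_one_iff.mp h0, psum_zero] using Nat.find_spec hex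
  · exact le_antisymm (not_lt.mp (Nat.find_min hex hk)) (h.1 k)

lemma Dominates.exists_psum_eq_of_lt (h : Dominates l m) {i : ℕ} (hi : psum m i < psum l i) :
    ∃ j, i < j ∧ psum l j = psum m j ∧ ∀ k, i ≤ k → k < j → psum m k < psum l k := by
  have hex : ∃ j, i < j ∧ psum l j = psum m j :=
    ⟨plen l + plen m + i + 1, by omega,
      by rw [psum_of_plen_le l (by omega), psum_of_plen_le m (by omega)]⟩
  refine ⟨Nat.find hex, (Nat.find_spec hex).1, (Nat.find_spec hex).2, fun k hik hk => ?_⟩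
  rcases hik.eq_or_lt with rfl | hik
  · exact hi
  · exact (h k).lt_of_ne fun heq => Nat.find_min hex hk ⟨hik, heq.symm⟩

lemma part_lt_of_psum_lt_of_forall_lt {i : ℕ} (hi : 1 ≤ i) (hlt : psum m i < psum l i)
    (heq : ∀ k < i, psum l k = psum m k) (k : ℕ) (hk : 1 ≤ k) (hki : k < i) :
    part m i < part m k := by
  obtain ⟨i, rfl⟩ : ∃ i', i = i' + 1 := ⟨i - 1, by omega⟩
  obtain ⟨k, rfl⟩ : ∃ k', k = k' + 1 := ⟨k - 1, by omega⟩
  have := part_antitone l hki.le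
  have := psum_succ l i; have := psum_succ m i; have := heq i (by omega)
  have := psum_succ l k; have := psum_succ m k
  have := heq k (by omega); have := heq (k + 1) hki
  omega

lemma Dominates.part_lt_of_psum_lt_of_eq (h : Dominates l m) {j : ℕ} (hj : 1 ≤ j)
    (hlt : psum m (j - 1) < psum l (j - 1)) (heq : psum l j = psum m j) (k : ℕ) (hjk : j < k) :
    part m k < part m j := by
  obtain ⟨j, rfl⟩ : ∃ j', j = j' + 1 := ⟨j - 1, by omega⟩
  have := part_antitone m (show j + 1 + 1 ≤ k by omega)
  have := part_antitone l (Nat.le_add_right (j + 1) 1)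
  have := psum_succ l j; have := psum_succ m j
  have := psum_succ l (j + 1); have := psum_succ m (j + 1); have := h (j + 1 + 1)
  simp only [Nat.add_sub_cancel] at hlt
  omega

end Dominance

/-- If `λ` covers `μ` in the dominance order on partitions of `n`, then there are
indices `i < j` with `λ_i = μ_i + 1`, `λ_j = μ_j - 1` and `λ_k = μ_k` for `k ≠ i, j`. -/
theorem cover_characterization (n : ℕ) (l m : Nat.Partition n) (h : Covers l m) :
    ∃ i j : ℕ, 1 ≤ i ∧ i < j ∧
      part l i = part m i + 1 ∧
      part l j + 1 = part m j ∧
      ∀ k, 1 ≤ k → k ≠ i → k ≠ j → part l k = part m k := by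
  obtain ⟨i, hi, hlt_i, heq_before⟩ := h.1.exists_first_psum_lt
  obtain ⟨j, hij, heq_j, hlt_between⟩ := h.1.1.exists_psum_eq_of_lt hlt_i
  obtain ⟨ν, hν⟩ := exists_part_add_ite_eq m hi hij
    (part_lt_of_psum_lt_of_forall_lt hi hlt_i heq_before)
    (h.1.1.part_lt_of_psum_lt_of_eq (by omega) (hlt_between _ (by omega) (by omega)) heq_j)
  have hpsum := psum_add_ite_le hi (by omega) hν
  have hlν : l = ν := by
    refine h.eq_of_dominates (fun k => ?_) (fun k => ?_) fun hνm => ?_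
    · have := hpsum k
      have := h.1.1 k
      by_cases hk : i ≤ k ∧ k < j
      · have := hlt_between k hk.1 hk.2
        split_ifs at * <;> omega
      · split_ifs at * <;> omega
    · have := hpsum k
      split_ifs at * <;> omega
    · have := hpsum i
      simp [hνm, hij.not_ge] at this
  subst hlν
  refine ⟨i, j, hi, hij, ?_, ?_, fun k hk hki hkj => ?_⟩
  · simpa [hij.ne] using hν i hi
  · simpa [hij.ne'] using hν j (by omega)
  · simpa [hki, hkj] using hν k hk
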